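/- In any connected finite simple graph, the minimum circle-covering number N_circ(r) (minimum number of circles of radius r covering all vertices) and the minimum box-covering number N_box(l) satisfy N_box(2r−1) ≤ N_circ(r) and N_circ(l) ≤ N_box(l) for all r, l ≥ 1; hence N_circ(2r−1) ≤ N_box(2r−1) ≤ N_circ(r). -/
import Mathlib


/-- In a connected finite simple graph, the circle-covering number `Ncirc` and the
box-covering number `Nbox` satisfy `Nbox (2r-1) ≤ Ncirc r` and `Ncirc l ≤ Nbox l`,
hence `Ncirc (2r-1) ≤ Nbox (2r-1) ≤ Ncirc r`. -/
theorem circ_box_cover_relations {V : Type*} [Fintype V] (G : SimpleGraph V)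
    (hG : G.Connected) (Nbox Ncirc : ℕ → ℕ)
    (hbox : ∀ l, Nbox l = sInf {k : ℕ | ∃ f : Fin k → Set V,
        (∀ i, ∀ u ∈ f i, ∀ v ∈ f i, u ≠ v → G.dist u v < l) ∧ ∀ v, ∃ i, v ∈ f i})
    (hcirc : ∀ r, Ncirc r = sInf {k : ℕ | ∃ f : Fin k → V, ∀ v, ∃ i, G.dist (f i) v < r}) :
    ∀ r l : ℕ, 1 ≤ r → 1 ≤ l →
      Nbox (2 * r - 1) ≤ Ncirc r ∧ Ncirc l ≤ Nbox l ∧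
      Ncirc (2 * r - 1) ≤ Nbox (2 * r - 1) ∧ Nbox (2 * r - 1) ≤ Ncirc r := by
  have hV : Nonempty V := hG.nonempty
  obtain ⟨v0⟩ := hV
  -- circle covers give box covers
  have key1 : ∀ r : ℕ, 1 ≤ r → ∀ k,
      k ∈ {k : ℕ | ∃ f : Fin k → V, ∀ v, ∃ i, G.dist (f i) v < r} →
      k ∈ {k : ℕ | ∃ f : Fin k → Set V,
        (∀ i, ∀ u ∈ f i, ∀ v ∈ f i, u ≠ v → G.dist u v < 2 * r - 1) ∧ ∀ v, ∃ i, v ∈ f i} := by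
    intro r hr k ⟨f, hf⟩
    refine ⟨fun i => {v | G.dist (f i) v < r}, ?_, ?_⟩
    · intro i u hu v hv huv
      have h1 : G.dist u v ≤ G.dist u (f i) + G.dist (f i) v := hG.dist_triangle
      have h2 : G.dist u (f i) = G.dist (f i) u := G.dist_comm
      have hu' : G.dist (f i) u < r := hu
      have hv' : G.dist (f i) v < r := hv
      omega
    · intro v
      exact hf v
  -- box covers give circle covers
  have key2 : ∀ l : ℕ, 1 ≤ l → ∀ k,
      k ∈ {k : ℕ | ∃ f : Fin k → Set V,
        (∀ i, ∀ u ∈ f i, ∀ v ∈ f i, u ≠ v → G.dist u v < l) ∧ ∀ v, ∃ i, v ∈ f i} →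
      k ∈ {k : ℕ | ∃ f : Fin k → V, ∀ v, ∃ i, G.dist (f i) v < l} := by
    intro l hl k ⟨f, hsmall, hcov⟩
    classical
    refine ⟨fun i => if h : (f i).Nonempty then h.choose else v0, ?_⟩
    intro v
    obtain ⟨i, hi⟩ := hcov v
    refine ⟨i, ?_⟩
    have hne : (f i).Nonempty := ⟨v, hi⟩
    simp only [dif_pos hne]
    by_cases hv : hne.choose = v
    · rw [hv, SimpleGraph.dist_self]; omega
    · exact hsmall i _ hne.choose_spec v hi hv
  -- nonemptiness witnesses
  have hcne : ∀ r : ℕ, 1 ≤ r →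
      Fintype.card V ∈ {k : ℕ | ∃ f : Fin k → V, ∀ v, ∃ i, G.dist (f i) v < r} := by
    intro r hr
    refine ⟨(Fintype.equivFin V).symm, fun v => ⟨Fintype.equivFin V v, ?_⟩⟩
    simp [SimpleGraph.dist_self]
    omega
  have hbne : ∀ l : ℕ, 1 ≤ l →
      Fintype.card V ∈ {k : ℕ | ∃ f : Fin k → Set V,
        (∀ i, ∀ u ∈ f i, ∀ v ∈ f i, u ≠ v → G.dist u v < l) ∧ ∀ v, ∃ i, v ∈ f i} := by
    intro l hl
    refine ⟨fun i => {(Fintype.equivFin V).symm i}, ?_, fun v => ⟨Fintype.equivFin V v, by simp⟩⟩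
    intro i u hu v hv huv
    simp only [Set.mem_singleton_iff] at hu hv
    exact absurd (hu.trans hv.symm) huv
  intro r l hr hl
  have h2r : 1 ≤ 2 * r - 1 := by omega
  have A : Nbox (2 * r - 1) ≤ Ncirc r := by
    rw [hbox, hcirc]
    exact Nat.sInf_le (key1 r hr _ (Nat.sInf_mem ⟨_, hcne r hr⟩))
  have B : ∀ l : ℕ, 1 ≤ l → Ncirc l ≤ Nbox l := by
    intro l hl
    rw [hbox, hcirc]
    exact Nat.sInf_le (key2 l hl _ (Nat.sInf_mem ⟨_, hbne l hl⟩))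
  exact ⟨A, B l hl, B _ h2r, A⟩
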